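/- For real α, the integral I(α, β) = ∫₀¹ (c(x)^{α+1}·x^{−β} + c(1−x)^{α+1}·(1−x)^{−β} − 1)·(x(1−x))^{−3/2} dx converges (is finite) for every β < 2α + 3/2, where c(x) = x²(3−2x). -/

import Mathlib

/-- The limiting split function `c(x) = x²(3-2x)`. -/
def cfun (x : ℝ) : ℝ := x ^ 2 * (3 - 2 * x)

/-!
The integrand is invariant under `x ↦ 1 - x`, so it suffices to integrate over `(0, 1/2)`.
There `c(x)^(α+1) x^(-β) = x^(2α+2-β) (3-2x)^(α+1)`, so the first term contributes
`O(x^(2α+1/2-β))`, integrable since `β < 2α + 3/2`. The other two terms are `g(x) - 1` with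
`g(x) = c(1-x)^(α+1) (1-x)^(-β)` smooth on `[0, 1/2]` and `g(0) = 1`, hence `O(x)`; against
`(x(1-x))^(-3/2)` this is `O(x^(-1/2))`.
-/

open MeasureTheory Set Real

@[fun_prop]
lemma continuous_cfun : Continuous cfun := by unfold cfun; fun_prop

lemma cfun_one_sub (x : ℝ) : cfun (1 - x) = (1 - x) ^ 2 * (1 + 2 * x) := by
  unfold cfun; ring

lemma cfun_rpow {x : ℝ} (hx₀ : 0 ≤ x) (hx₁ : x ≤ 3 / 2) (s : ℝ) :
    cfun x ^ s = x ^ (2 * s) * (3 - 2 * x) ^ s := by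
  rw [cfun, mul_rpow (by positivity) (by linarith), ← rpow_natCast, ← rpow_mul hx₀]
  norm_num

lemma integrableOn_Ioo_zero_of_abs_le_add_rpow {f : ℝ → ℝ} {a p q C D : ℝ} (ha : 0 < a)
    (hp : -1 < p) (hq : -1 < q) (hf : AEStronglyMeasurable f (volume.restrict (Ioo 0 a)))
    (hle : ∀ x ∈ Ioo 0 a, |f x| ≤ C * x ^ p + D * x ^ q) :
    IntegrableOn f (Ioo 0 a) := by
  refine Integrable.mono' ((((intervalIntegral.integrableOn_Ioo_rpow_iff ha).2 hp).const_mul C).add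
    (((intervalIntegral.integrableOn_Ioo_rpow_iff ha).2 hq).const_mul D)) hf ?_
  filter_upwards [ae_restrict_mem measurableSet_Ioo] with x hx
  exact hle x hx

lemma IntegrableOn.Ioo_of_symmetric {E : Type*} [NormedAddCommGroup E] {f : ℝ → E} {a b : ℝ}
    (hsymm : ∀ x, f (a + b - x) = f x) (hf : IntegrableOn f (Ioo a ((a + b) / 2))) :
    IntegrableOn f (Ioo a b) := by
  have hpre : (fun x => a + b - x) ⁻¹' Ioo a ((a + b) / 2) = Ioo ((a + b) / 2) b := by
    ext x
    simp only [mem_preimage, mem_Ioo]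
    constructor <;> intro h <;> constructor <;> linarith [h.1, h.2]
  have hf' : IntegrableOn f (Ioo ((a + b) / 2) b) := by
    have := ((Measure.measurePreserving_sub_left volume (a + b)).integrableOn_comp_preimage
      (Homeomorph.subLeft (a + b)).measurableEmbedding).2 hf
    rwa [hpre, show f ∘ (fun x => a + b - x) = f from funext hsymm] at this
  refine (hf.union ((integrableOn_Ico_iff_integrableOn_Ioo).2 hf')).mono_set fun x hx => ?_
  rcases lt_or_ge x ((a + b) / 2) with h | h
  · exact Or.inl ⟨hx.1, h⟩
  · exact Or.inr ⟨h, hx.2⟩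

lemma exists_abs_cfun_one_sub_rpow_sub_one_le (α β : ℝ) :
    ∃ L, ∀ x ∈ Icc (0 : ℝ) (1 / 2),
      |cfun (1 - x) ^ (α + 1) * (1 - x) ^ (-β) - 1| ≤ L * x := by
  have hpos : ∀ x ∈ Icc (0 : ℝ) (1 / 2), 0 < 1 - x := fun x hx => by linarith [hx.2]
  have hsmooth : ContDiffOn ℝ 1 (fun x => cfun (1 - x) ^ (α + 1) * (1 - x) ^ (-β))
      (Icc 0 (1 / 2)) := by
    refine .mul (.rpow_const_of_ne (by simp only [cfun_one_sub]; fun_prop) fun x hx => ?_)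
      (.rpow_const_of_ne (by fun_prop) fun x hx => (hpos x hx).ne')
    rw [cfun_one_sub]
    exact (mul_pos (pow_pos (hpos x hx) 2) (by linarith [hx.1])).ne'
  obtain ⟨K, hK⟩ := hsmooth.exists_lipschitzOnWith one_ne_zero (convex_Icc _ _) isCompact_Icc
  refine ⟨K, fun x hx => ?_⟩
  have := hK.dist_le_mul x hx 0 (by norm_num)
  norm_num [cfun, Real.dist_eq, abs_of_nonneg hx.1] at this
  exact this

noncomputable def integrandI (α β x : ℝ) : ℝ :=
  (cfun x ^ (α + 1) * x ^ (-β) + cfun (1 - x) ^ (α + 1) * (1 - x) ^ (-β) - 1) *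
    (x * (1 - x)) ^ (-(3 / 2) : ℝ)

lemma integrandI_one_sub (α β x : ℝ) : integrandI α β (1 - x) = integrandI α β x := by
  rw [integrandI, integrandI, sub_sub_cancel, mul_comm (1 - x)]
  ring

lemma measurable_integrandI (α β : ℝ) : Measurable (integrandI α β) := by
  unfold integrandI; fun_prop

lemma integrableOn_integrandI_Ioo_zero_half {α β : ℝ} (hβ : β < 2 * α + 3 / 2) :
    IntegrableOn (integrandI α β) (Ioo 0 (1 / 2)) := by
  set p := 2 * (α + 1) - β - 3 / 2 with hp
  obtain ⟨L, hL⟩ := exists_abs_cfun_one_sub_rpow_sub_one_le α β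
  obtain ⟨M, hM⟩ := isCompact_Icc.exists_bound_of_continuousOn (s := Icc (0 : ℝ) (1 / 2))
    (f := fun x : ℝ => (3 - 2 * x) ^ (α + 1) * (1 - x) ^ (-(3 / 2) : ℝ)) <|
    .mul (.rpow_const (by fun_prop) fun x hx => Or.inl (by linarith [hx.2]))
      (.rpow_const (by fun_prop) fun x hx => Or.inl (by linarith [hx.2]))
  obtain ⟨N, hN⟩ := isCompact_Icc.exists_bound_of_continuousOn (s := Icc (0 : ℝ) (1 / 2))
    (f := fun x : ℝ => (1 - x) ^ (-(3 / 2) : ℝ)) <|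
    .rpow_const (by fun_prop) fun x hx => Or.inl (by linarith [hx.2])
  refine integrableOn_Ioo_zero_of_abs_le_add_rpow (p := p) (q := -(1 / 2)) (C := M) (D := L * N)
    (by norm_num) (by rw [hp]; linarith) (by norm_num)
    (measurable_integrandI α β).aestronglyMeasurable fun x hx => ?_
  obtain ⟨hx₀, hx₁⟩ := hx
  have hIcc : x ∈ Icc (0 : ℝ) (1 / 2) := ⟨hx₀.le, hx₁.le⟩
  set w := (1 - x) ^ (-(3 / 2) : ℝ)
  have hw : 0 ≤ w := rpow_nonneg (by linarith) _
  have hexp : x ^ (2 * (α + 1)) * x ^ (-β) * x ^ (-(3 / 2) : ℝ) = x ^ p := by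
    rw [← rpow_add hx₀, ← rpow_add hx₀, hp]; ring_nf
  have hsplit : integrandI α β x = (3 - 2 * x) ^ (α + 1) * w * x ^ p +
      (cfun (1 - x) ^ (α + 1) * (1 - x) ^ (-β) - 1) * w * x ^ (-(3 / 2) : ℝ) := by
    rw [integrandI, cfun_rpow hx₀.le (by linarith), mul_rpow hx₀.le (by linarith), ← hexp]
    ring
  have hpow : x * x ^ (-(3 / 2) : ℝ) = x ^ (-(1 / 2) : ℝ) := by
    rw [mul_comm, ← rpow_add_one hx₀.ne']; norm_num
  calc |integrandI α β x|
      ≤ |(3 - 2 * x) ^ (α + 1) * w| * x ^ p +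
        |cfun (1 - x) ^ (α + 1) * (1 - x) ^ (-β) - 1| * w * x ^ (-(3 / 2) : ℝ) := by
        rw [hsplit]
        refine (abs_add_le _ _).trans_eq ?_
        rw [abs_mul (_ * w), abs_mul (_ * w), abs_mul (_ - 1) w, abs_of_nonneg hw,
          abs_of_nonneg (rpow_nonneg hx₀.le _), abs_of_nonneg (rpow_nonneg hx₀.le _)]
    _ ≤ M * x ^ p + L * x * N * x ^ (-(3 / 2) : ℝ) := by
        have hMx : |(3 - 2 * x) ^ (α + 1) * w| ≤ M := hM x hIcc
        have hLx := hL x hIcc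
        have hNx : w ≤ N := (le_abs_self w).trans (hN x hIcc)
        have hLx₀ : 0 ≤ L * x := (abs_nonneg _).trans hLx
        gcongr
    _ = M * x ^ p + L * N * x ^ (-(1 / 2) : ℝ) := by rw [← hpow]; ring

theorem integrable_I (α β : ℝ) (hβ : β < 2 * α + 3 / 2) :
    MeasureTheory.IntegrableOn
      (fun x : ℝ =>
        (cfun x ^ (α + 1) * x ^ (-β) + cfun (1 - x) ^ (α + 1) * (1 - x) ^ (-β) - 1) *
          (x * (1 - x)) ^ (-(3 / 2) : ℝ))
      (Set.Ioo 0 1) := by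
  show IntegrableOn (integrandI α β) (Ioo 0 1)
  refine IntegrableOn.Ioo_of_symmetric (fun x => ?_) ?_
  · rw [zero_add, integrandI_one_sub]
  · rw [zero_add]; exact integrableOn_integrandI_Ioo_zero_half hβ
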